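/- arXiv:2504.17442 — 2 statements merged into one kernel-verified Lean document; each statement's English description precedes it below -/
import Mathlib

section
/- With the wavelet transform W_φ(f)(x) = ⟨f, U_x φ⟩ associated to a projective unitary representation with cocycle m, for any φ₀, φ₁, φ₂, φ₃ ∈ H satisfying the Godement orthogonality relation ∫_Ξ W_{ψ₀}(f)(x) · conj(W_{ψ₁}(g)(x)) dx = ⟨f, g⟩ ⟨ψ₁, ψ₀⟩, one has the twisted convolution identity W_{φ₀}(φ₃) ∗' W_{φ₁}(φ₂) = ⟨φ₂, φ₀⟩ · W_{φ₁}(φ₃). -/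
/-! Since `U y ∘ U (y⁻¹ x) = m(y, y⁻¹ x) • U x` and `U y` is an isometry, the integrand
equals `W_{φ₀}(φ₃)(y) · conj (W_{φ₂}(U x φ₁)(y))`, so the twisted convolution is a single
instance of the orthogonality relation. -/

open MeasureTheory ContinuousLinearMap

section IsometryFactorization

variable {E F G : Type*} [NormedAddCommGroup E] [InnerProductSpace ℂ E] [CompleteSpace E]
  [NormedAddCommGroup F] [InnerProductSpace ℂ F] [CompleteSpace F]
  [NormedAddCommGroup G] [InnerProductSpace ℂ G]
  {A : E →L[ℂ] F} {B : G →L[ℂ] E} {C : G →L[ℂ] F} {c : ℂ}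

theorem apply_eq_smul_adjoint_apply_of_comp_eq_smul (hA : adjoint A ∘L A = 1)
    (h : A ∘L B = c • C) (v : G) : B v = c • adjoint A (C v) := by
  calc B v = (adjoint A ∘L (A ∘L B)) v := by rw [← comp_assoc, hA]; rfl
    _ = c • adjoint A (C v) := by rw [h, comp_smul, smul_apply, comp_apply]

theorem inner_apply_mul_eq_conj_inner_of_comp_eq_smul (hA : adjoint A ∘L A = 1)
    (h : A ∘L B = c • C) (hc : ‖c‖ = 1) (v : G) (w : E) :
    inner ℂ (B v) w * c = (starRingEnd ℂ) (inner ℂ (A w) (C v)) := by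
  have hc' : (starRingEnd ℂ) c * c = 1 := by
    rw [Complex.conj_mul', hc, Complex.ofReal_one, one_pow]
  rw [apply_eq_smul_adjoint_apply_of_comp_eq_smul hA h, inner_smul_left,
    adjoint_inner_left, inner_conj_symm]
  linear_combination inner ℂ (C v) (A w) * hc'

end IsometryFactorization

theorem wavelet_twisted_convolution_general {Ξ : Type*} [CommGroup Ξ] [MeasurableSpace Ξ]
    {H : Type*} [NormedAddCommGroup H] [InnerProductSpace ℂ H] [CompleteSpace H]
    (μ : Measure Ξ)
    (m : Ξ → Ξ → ℂ) (hnorm : ∀ x y, ‖m x y‖ = 1)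
    (U : Ξ → H →L[ℂ] H)
    (hunit : ∀ x, adjoint (U x) ∘L U x = 1 ∧ U x ∘L adjoint (U x) = 1)
    (hproj : ∀ x y, U x ∘L U y = m x y • U (x * y))
    (W : H → H → Ξ → ℂ)
    (hW : ∀ ψ g x, W ψ g x = inner ℂ (U x ψ) g)
    -- Godement orthogonality: ∫ W_{ψ₀}(f) conj(W_{ψ₁}(g)) = ⟨f,g⟩⟨ψ₁,ψ₀⟩
    (hGod : ∀ ψ₀ ψ₁ f g : H,
      ∫ x, W ψ₀ f x * (starRingEnd ℂ) (W ψ₁ g x) ∂μ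
        = (inner ℂ g f : ℂ) * (inner ℂ ψ₀ ψ₁ : ℂ))
    (φ₀ φ₁ φ₂ φ₃ : H) :
    ∀ x : Ξ, ∫ y, W φ₀ φ₃ y * W φ₁ φ₂ (y⁻¹ * x) * m y (y⁻¹ * x) ∂μ
      = (inner ℂ φ₀ φ₂ : ℂ) * W φ₁ φ₃ x := by
  intro x
  have twist : ∀ y, W φ₁ φ₂ (y⁻¹ * x) * m y (y⁻¹ * x)
      = (starRingEnd ℂ) (W φ₂ (U x φ₁) y) := by
    intro y
    have hcomp : U y ∘L U (y⁻¹ * x) = m y (y⁻¹ * x) • U x := by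
      rw [hproj, mul_inv_cancel_left]
    rw [hW, hW]
    exact inner_apply_mul_eq_conj_inner_of_comp_eq_smul (hunit y).1 hcomp (hnorm _ _) φ₁ φ₂
  calc ∫ y, W φ₀ φ₃ y * W φ₁ φ₂ (y⁻¹ * x) * m y (y⁻¹ * x) ∂μ
      = ∫ y, W φ₀ φ₃ y * (starRingEnd ℂ) (W φ₂ (U x φ₁) y) ∂μ := by
        simp_rw [mul_assoc, twist]
    _ = inner ℂ (U x φ₁) φ₃ * inner ℂ φ₀ φ₂ := hGod φ₀ φ₂ φ₃ (U x φ₁)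
    _ = inner ℂ φ₀ φ₂ * W φ₁ φ₃ x := by rw [hW, mul_comm]

/-- The twisted convolution identity for wavelet transforms:
`W_{φ₀}(φ₃) ∗' W_{φ₁}(φ₂) = ⟨φ₂, φ₀⟩ · W_{φ₁}(φ₃)`, assuming Godement's
orthogonality relation holds (Haar measure normalized so the constant is 1).
Here `W ψ g x = ⟨g, U_x ψ⟩`, which in Mathlib conventions (inner antilinear in the
first argument) reads `inner (U x ψ) g`. -/
theorem wavelet_twisted_convolution {Ξ : Type*} [CommGroup Ξ] [MeasurableSpace Ξ]
    {H : Type*} [NormedAddCommGroup H] [InnerProductSpace ℂ H] [CompleteSpace H]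
    (μ : Measure Ξ)
    (m : Ξ → Ξ → ℂ) (hnorm : ∀ x y, ‖m x y‖ = 1)
    (hcoc : ∀ x y z, m (x * y) z * m x y = m x (y * z) * m y z)
    (he : m 1 1 = 1) (hminv : ∀ x y, m x y = m x⁻¹ y⁻¹)
    (U : Ξ → H →L[ℂ] H)
    (hunit : ∀ x, adjoint (U x) ∘L U x = 1 ∧ U x ∘L adjoint (U x) = 1)
    (hproj : ∀ x y, U x ∘L U y = m x y • U (x * y))
    (W : H → H → Ξ → ℂ)
    (hW : ∀ ψ g x, W ψ g x = inner ℂ (U x ψ) g)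
    -- Godement orthogonality: ∫ W_{ψ₀}(f) conj(W_{ψ₁}(g)) = ⟨f,g⟩⟨ψ₁,ψ₀⟩
    (hGod : ∀ ψ₀ ψ₁ f g : H,
      ∫ x, W ψ₀ f x * (starRingEnd ℂ) (W ψ₁ g x) ∂μ
        = (inner ℂ g f : ℂ) * (inner ℂ ψ₀ ψ₁ : ℂ))
    -- integrability so that the twisted convolution is defined
    (φ₀ φ₁ φ₂ φ₃ : H)
    (hint : ∀ x : Ξ, Integrable
      (fun y => W φ₀ φ₃ y * W φ₁ φ₂ (y⁻¹ * x) * m y (y⁻¹ * x)) μ) :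
    ∀ x : Ξ, ∫ y, W φ₀ φ₃ y * W φ₁ φ₂ (y⁻¹ * x) * m y (y⁻¹ * x) ∂μ
      = (inner ℂ φ₀ φ₂ : ℂ) * W φ₁ φ₃ x :=
  wavelet_twisted_convolution_general μ m hnorm U hunit hproj W hW hGod φ₀ φ₁ φ₂ φ₃
end

section
/- For a fixed nonzero window φ₀ ∈ H with W_{φ₀}(φ₀) ∈ L¹(Ξ), the wavelet transform of any f ∈ H with W_{φ₀}(f) ∈ L¹(Ξ) satisfies the reproducing formula W_{φ₀}(f) = (1/‖φ₀‖²) · W_{φ₀}(f) ∗' W_{φ₀}(φ₀). -/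
open MeasureTheory ContinuousLinearMap

/-!
Writing `U_x U_{x'} = m(x, x') U_{x x'}` with `x' = y⁻¹ x` and using that `U_y` is an isometry gives
`W_{φ₀}(φ₀)(y⁻¹ x) m(y, y⁻¹ x) = conj (W_{φ₀}(U_x φ₀)(y))`. Hence the twisted convolution
`W_{φ₀}(f) ∗' W_{φ₀}(φ₀)` at `x` is the Godement integral of `W_{φ₀}(f)` against `W_{φ₀}(U_x φ₀)`,
which equals `⟨f, U_x φ₀⟩ ‖φ₀‖² = W_{φ₀}(f)(x) ‖φ₀‖²`.
-/

section Adjoint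

variable {𝕜 E F G : Type*} [RCLike 𝕜]
  [NormedAddCommGroup E] [InnerProductSpace 𝕜 E] [CompleteSpace E]
  [NormedAddCommGroup F] [InnerProductSpace 𝕜 F] [CompleteSpace F]
  [NormedAddCommGroup G] [InnerProductSpace 𝕜 G]

theorem adjoint_comp_eq_conj_smul_of_comp_eq_smul {A : E →L[𝕜] F} {B : G →L[𝕜] E}
    {C : G →L[𝕜] F} {c : 𝕜} (hA : adjoint A ∘L A = 1) (hc : ‖c‖ = 1) (h : A ∘L B = c • C) :
    adjoint A ∘L C = (starRingEnd 𝕜) c • B := by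
  have hcc : (starRingEnd 𝕜) c * c = 1 := by
    rw [RCLike.conj_mul, hc]
    norm_num
  calc adjoint A ∘L C = ((starRingEnd 𝕜) c * c) • (adjoint A ∘L C) := by rw [hcc, one_smul]
    _ = (starRingEnd 𝕜) c • (adjoint A ∘L (A ∘L B)) := by rw [h, comp_smul, smul_smul]
    _ = (starRingEnd 𝕜) c • B := by rw [← comp_assoc, hA, one_def, id_comp]

end Adjoint

section ProjectiveRepresentation

variable {Ξ H : Type*} [Group Ξ]
  [NormedAddCommGroup H] [InnerProductSpace ℂ H] [CompleteSpace H]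
  {m : Ξ → Ξ → ℂ} {U : Ξ → H →L[ℂ] H}

theorem adjoint_comp_eq_of_projective (hnorm : ∀ x y, ‖m x y‖ = 1)
    (hiso : ∀ x, adjoint (U x) ∘L U x = 1) (hproj : ∀ x y, U x ∘L U y = m x y • U (x * y))
    (x y : Ξ) :
    adjoint (U y) ∘L U x = (starRingEnd ℂ) (m y (y⁻¹ * x)) • U (y⁻¹ * x) := by
  refine adjoint_comp_eq_conj_smul_of_comp_eq_smul (hiso y) (hnorm _ _) ?_
  rw [hproj, mul_inv_cancel_left]

theorem inner_apply_inv_mul_mul_cocycle (hnorm : ∀ x y, ‖m x y‖ = 1)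
    (hiso : ∀ x, adjoint (U x) ∘L U x = 1) (hproj : ∀ x y, U x ∘L U y = m x y • U (x * y))
    (φ ψ : H) (x y : Ξ) :
    inner ℂ (U (y⁻¹ * x) φ) ψ * m y (y⁻¹ * x) = inner ℂ (U x φ) (U y ψ) := by
  rw [← adjoint_inner_left, ← comp_apply, adjoint_comp_eq_of_projective hnorm hiso hproj,
    smul_apply, inner_smul_left, Complex.conj_conj, mul_comm]

end ProjectiveRepresentation

theorem wavelet_reproducing_formula_general {Ξ : Type*} [CommGroup Ξ] [MeasurableSpace Ξ]
    {H : Type*} [NormedAddCommGroup H] [InnerProductSpace ℂ H] [CompleteSpace H]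
    (μ : Measure Ξ)
    (m : Ξ → Ξ → ℂ) (hnorm : ∀ x y, ‖m x y‖ = 1)
    (U : Ξ → H →L[ℂ] H)
    (hunit : ∀ x, adjoint (U x) ∘L U x = 1 ∧ U x ∘L adjoint (U x) = 1)
    (hproj : ∀ x y, U x ∘L U y = m x y • U (x * y))
    (W : H → H → Ξ → ℂ)
    (hW : ∀ ψ g x, W ψ g x = inner ℂ (U x ψ) g)
    (hGod : ∀ ψ₀ ψ₁ f g : H,
      ∫ x, W ψ₀ f x * (starRingEnd ℂ) (W ψ₁ g x) ∂μ
        = (inner ℂ g f : ℂ) * (inner ℂ ψ₀ ψ₁ : ℂ))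
    (φ₀ : H) (hφ₀ : φ₀ ≠ 0)
    (f : H) :
    ∀ x : Ξ, W φ₀ f x
      = ((‖φ₀‖ : ℂ) ^ 2)⁻¹ * ∫ y, W φ₀ f y * W φ₀ φ₀ (y⁻¹ * x) * m y (y⁻¹ * x) ∂μ := by
  intro x
  have hkernel : ∀ y, W φ₀ φ₀ (y⁻¹ * x) * m y (y⁻¹ * x)
      = (starRingEnd ℂ) (W φ₀ (U x φ₀) y) := by
    intro y
    rw [hW, hW, inner_conj_symm,
      inner_apply_inv_mul_mul_cocycle hnorm (fun x => (hunit x).1) hproj]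
  have hconv : ∫ y, W φ₀ f y * W φ₀ φ₀ (y⁻¹ * x) * m y (y⁻¹ * x) ∂μ
      = W φ₀ f x * (‖φ₀‖ : ℂ) ^ 2 := by
    simp_rw [mul_assoc, hkernel]
    rw [hGod, ← hW, inner_self_eq_norm_sq_to_K,
      RCLike.ofReal_eq_complex_ofReal]
  have hφ₀norm : (‖φ₀‖ : ℂ) ^ 2 ≠ 0 := by simpa using hφ₀
  rw [hconv, mul_comm, mul_inv_cancel_right₀ hφ₀norm]

/-- The reproducing formula for the wavelet transform:
`W_{φ₀}(f) = (1/‖φ₀‖²) · W_{φ₀}(f) ∗' W_{φ₀}(φ₀)`, assuming Godement's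
orthogonality relation (with constant 1) and integrability of the relevant
wavelet transforms. Here `W ψ g x = ⟨g, U_x ψ⟩ = inner (U x ψ) g`. -/
theorem wavelet_reproducing_formula {Ξ : Type*} [CommGroup Ξ] [MeasurableSpace Ξ]
    {H : Type*} [NormedAddCommGroup H] [InnerProductSpace ℂ H] [CompleteSpace H]
    (μ : Measure Ξ)
    (m : Ξ → Ξ → ℂ) (hnorm : ∀ x y, ‖m x y‖ = 1)
    (hcoc : ∀ x y z, m (x * y) z * m x y = m x (y * z) * m y z)
    (he : m 1 1 = 1) (hminv : ∀ x y, m x y = m x⁻¹ y⁻¹)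
    (U : Ξ → H →L[ℂ] H)
    (hunit : ∀ x, adjoint (U x) ∘L U x = 1 ∧ U x ∘L adjoint (U x) = 1)
    (hproj : ∀ x y, U x ∘L U y = m x y • U (x * y))
    (W : H → H → Ξ → ℂ)
    (hW : ∀ ψ g x, W ψ g x = inner ℂ (U x ψ) g)
    (hGod : ∀ ψ₀ ψ₁ f g : H,
      ∫ x, W ψ₀ f x * (starRingEnd ℂ) (W ψ₁ g x) ∂μ
        = (inner ℂ g f : ℂ) * (inner ℂ ψ₀ ψ₁ : ℂ))
    (φ₀ : H) (hφ₀ : φ₀ ≠ 0)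
    (hφ₀int : Integrable (W φ₀ φ₀) μ)
    (f : H) (hfint : Integrable (W φ₀ f) μ)
    (hint : ∀ x : Ξ, Integrable
      (fun y => W φ₀ f y * W φ₀ φ₀ (y⁻¹ * x) * m y (y⁻¹ * x)) μ) :
    ∀ x : Ξ, W φ₀ f x
      = ((‖φ₀‖ : ℂ) ^ 2)⁻¹ * ∫ y, W φ₀ f y * W φ₀ φ₀ (y⁻¹ * x) * m y (y⁻¹ * x) ∂μ :=
  wavelet_reproducing_formula_general μ m hnorm U hunit hproj W hW hGod φ₀ hφ₀ f
end
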